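/- arXiv:2207.12463 — 2 statements merged into one kernel-verified Lean document; each statement's English description precedes it below -/
import Mathlib

section
/- Let Λ = {x ∈ ℝ^d : ‖x‖₁ = 1, xᵢ ≥ 0 for all i} be the probability simplex, let f : Λ → ℝ be convex, α ≥ 0, z ∈ Λ, and y a relative interior point of Λ. If x* minimizes f(x) + α·D_KL(x, y) over Λ, then f(x*) + α·D_KL(x*, y) ≤ f(z) + α·D_KL(z, y) − α·D_KL(z, x*). -/
/-!
Moving from the minimiser `x` towards `z` along `x_t = (1 - t) x + t z`, convexity of `f` and
minimality of `x` give `t (f x - f z) ≤ α (KL(x_t, y) - KL(x, y))`. Coordinatewise,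
`KL(x_t, y) = KL(x_t, x) + ⟨x_t, log (x / y)⟩`, and `KL(x_t, x)` is bounded by the χ²-divergence
`t² ∑ (z_i - x_i)² / x_i` because `log u ≤ u - 1`. Hence `KL(x_t, y) - KL(x, y)` is
`t (KL(z, y) - KL(z, x) - KL(x, y)) + O(t²)`; dividing by `t` and letting `t → 0` gives the claim.
-/

open Finset Filter Set Topology

noncomputable def relEntropy {ι : Type*} [Fintype ι] (p q : ι → ℝ) : ℝ :=
  ∑ i, p i * Real.log (p i / q i)

lemma mul_log_div_le_sub_add_sq_div {x a : ℝ} (hx : 0 ≤ x) (ha : 0 < a) :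
    x * Real.log (x / a) ≤ (x - a) + (x - a) ^ 2 / a := by
  rcases hx.eq_or_lt with rfl | hx
  · simp [sq, ha.ne']
  calc x * Real.log (x / a) ≤ x * (x / a - 1) :=
        mul_le_mul_of_nonneg_left (Real.log_le_sub_one_of_pos (div_pos hx ha)) hx.le
    _ = (x - a) + (x - a) ^ 2 / a := by field_simp; ring

lemma mul_log_div_segment_sub_le_of_pos {a b y t : ℝ} (ha : 0 < a) (hb : 0 ≤ b) (hy : 0 < y)
    (ht₀ : 0 ≤ t) (ht₁ : t ≤ 1) :
    ((1 - t) * a + t * b) * Real.log (((1 - t) * a + t * b) / y) - a * Real.log (a / y) ≤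
      t * (b - a + (b - a) * Real.log (a / y)) + t ^ 2 * ((b - a) ^ 2 / a) := by
  set x := (1 - t) * a + t * b
  have hx : 0 ≤ x := by positivity
  have hsplit : x * Real.log (x / y) = x * Real.log (x / a) + x * Real.log (a / y) := by
    rcases hx.eq_or_lt with hx0 | hxpos
    · simp [← hx0]
    rw [← mul_add, ← Real.log_mul (div_pos hxpos ha).ne' (div_pos ha hy).ne',
      div_mul_div_cancel₀ ha.ne']
  have hxa : x - a = t * (b - a) := by ring
  have hchi := mul_log_div_le_sub_add_sq_div hx ha
  rw [hxa] at hchi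
  rw [hsplit]
  calc x * Real.log (x / a) + x * Real.log (a / y) - a * Real.log (a / y)
      = x * Real.log (x / a) + t * (b - a) * Real.log (a / y) := by rw [← hxa]; ring
    _ ≤ t * (b - a) + (t * (b - a)) ^ 2 / a + t * (b - a) * Real.log (a / y) := by gcongr
    _ = _ := by ring

lemma mul_mul_log_mul_div_le {b y t : ℝ} (hb : 0 ≤ b) (hy : 0 < y) (ht₀ : 0 ≤ t) (ht₁ : t ≤ 1) :
    t * b * Real.log (t * b / y) ≤ t * (b * Real.log (b / y)) := by
  rcases ht₀.eq_or_lt with rfl | ht₀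
  · simp
  rcases hb.eq_or_lt with rfl | hb
  · simp
  rw [mul_div_assoc, Real.log_mul ht₀.ne' (div_pos hb hy).ne']
  linarith [mul_nonneg (mul_nonneg ht₀.le hb.le) (neg_nonneg.mpr (Real.log_nonpos ht₀.le ht₁))]

lemma mul_log_div_sub_eq {a b y : ℝ} (ha : 0 < a) (hb : 0 ≤ b) (hy : 0 < y) :
    (b - a) * Real.log (a / y) =
      b * Real.log (b / y) - b * Real.log (b / a) - a * Real.log (a / y) := by
  rcases hb.eq_or_lt with rfl | hb
  · simp
  rw [Real.log_div hb.ne' hy.ne', Real.log_div hb.ne' ha.ne', Real.log_div ha.ne' hy.ne']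
  ring

/-- For `a = 0` the junk values `log (b / 0) = 0` and `(b - 0)² / 0 = 0` turn the bound into
`t b log (t b / y) ≤ t (b + b log (b / y))`. -/
lemma mul_log_div_segment_sub_le {a b y t : ℝ} (ha : 0 ≤ a) (hb : 0 ≤ b) (hy : 0 < y)
    (ht₀ : 0 ≤ t) (ht₁ : t ≤ 1) :
    ((1 - t) * a + t * b) * Real.log (((1 - t) * a + t * b) / y) - a * Real.log (a / y) ≤
      t * (b - a + (b * Real.log (b / y) - b * Real.log (b / a) - a * Real.log (a / y))) +
        t ^ 2 * ((b - a) ^ 2 / a) := by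
  rcases ha.eq_or_lt with rfl | ha
  · simp only [mul_zero, zero_add, zero_mul, sub_zero, div_zero, Real.log_zero]
    linarith [mul_mul_log_mul_div_le hb hy ht₀ ht₁, mul_nonneg ht₀ hb]
  rw [← mul_log_div_sub_eq ha hb hy]
  exact mul_log_div_segment_sub_le_of_pos ha hb hy ht₀ ht₁

lemma relEntropy_segment_sub_le {ι : Type*} [Fintype ι] {p q y : ι → ℝ} (hp : ∀ i, 0 ≤ p i)
    (hq : ∀ i, 0 ≤ q i) (hpq : ∑ i, p i = ∑ i, q i) (hy : ∀ i, 0 < y i) {t : ℝ}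
    (ht₀ : 0 ≤ t) (ht₁ : t ≤ 1) :
    relEntropy ((1 - t) • p + t • q) y - relEntropy p y ≤
      t * (relEntropy q y - relEntropy q p - relEntropy p y) +
        t ^ 2 * ∑ i, (q i - p i) ^ 2 / p i := by
  have hmass : ∑ i, (q i - p i) = 0 := by rw [sum_sub_distrib, hpq, sub_self]
  calc relEntropy ((1 - t) • p + t • q) y - relEntropy p y
      ≤ ∑ i, (t * (q i - p i + (q i * Real.log (q i / y i) - q i * Real.log (q i / p i) -
          p i * Real.log (p i / y i))) + t ^ 2 * ((q i - p i) ^ 2 / p i)) := by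
        rw [relEntropy, relEntropy, ← sum_sub_distrib]
        exact sum_le_sum fun i _ ↦
          mul_log_div_segment_sub_le (hp i) (hq i) (hy i) ht₀ ht₁
    _ = _ := by
        simp only [relEntropy, sum_add_distrib, ← mul_sum, sum_sub_distrib, hmass]
        ring

lemma ConvexOn.mul_sub_le_of_forall_add_le {E : Type*} [AddCommGroup E] [Module ℝ E]
    {s : Set E} {F G : E → ℝ} (hF : ConvexOn ℝ s F) {a b : E} (ha : a ∈ s) (hb : b ∈ s)
    (hmin : ∀ x ∈ s, F a + G a ≤ F x + G x) {t : ℝ} (ht₀ : 0 ≤ t) (ht₁ : t ≤ 1) :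
    t * (F a - F b) ≤ G ((1 - t) • a + t • b) - G a := by
  have hmem : (1 - t) • a + t • b ∈ s := hF.1 ha hb (sub_nonneg.2 ht₁) ht₀ (sub_add_cancel 1 t)
  have hconv := hF.2 ha hb (sub_nonneg.2 ht₁) ht₀ (sub_add_cancel 1 t)
  simp only [smul_eq_mul] at hconv
  linarith [hmin _ hmem]

lemma le_of_forall_mul_le_mul_add_sq_mul {c K M : ℝ}
    (h : ∀ t ∈ Ioc (0 : ℝ) 1, t * c ≤ t * K + t ^ 2 * M) : c ≤ K := by
  have hlim : Tendsto (fun t ↦ K + t * M) (𝓝[>] 0) (𝓝 K) := by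
    have : Tendsto (fun t : ℝ ↦ K + t * M) (𝓝 0) (𝓝 (K + 0 * M)) :=
      tendsto_const_nhds.add (tendsto_id.mul_const M)
    simpa using this.mono_left nhdsWithin_le_nhds
  refine ge_of_tendsto hlim ?_
  filter_upwards [Ioo_mem_nhdsGT (zero_lt_one' ℝ)] with t ht
  have := h t ⟨ht.1, ht.2.le⟩
  rw [← mul_le_mul_iff_right₀ ht.1]
  linarith

theorem stmt0_general {d : ℕ} (Λ : Set (Fin d → ℝ))
    (hΛ : Λ = {x : Fin d → ℝ | (∑ i, x i) = 1 ∧ ∀ i, 0 ≤ x i})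
    (f : (Fin d → ℝ) → ℝ) (hf : ConvexOn ℝ Λ f)
    (α : ℝ) (hα : 0 ≤ α)
    (KL : (Fin d → ℝ) → (Fin d → ℝ) → ℝ)
    (hKL : KL = fun p q => ∑ i, p i * Real.log (p i / q i))
    (z y xopt : Fin d → ℝ) (hz : z ∈ Λ) (hypos : ∀ i, 0 < y i)
    (hxopt : xopt ∈ Λ)
    (hmin : ∀ x ∈ Λ, f xopt + α * KL xopt y ≤ f x + α * KL x y) :
    f xopt + α * KL xopt y ≤ f z + α * KL z y - α * KL z xopt := by
  obtain rfl : KL = relEntropy := hKL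
  subst hΛ
  suffices f xopt - f z ≤ α * (relEntropy z y - relEntropy z xopt - relEntropy xopt y) by
    linarith
  refine le_of_forall_mul_le_mul_add_sq_mul (M := α * ∑ i, (z i - xopt i) ^ 2 / xopt i)
    fun t ht ↦ ?_
  have hstep := hf.mul_sub_le_of_forall_add_le (G := fun x ↦ α * relEntropy x y) hxopt hz hmin
    ht.1.le ht.2
  have hKLstep := relEntropy_segment_sub_le hxopt.2 hz.2 (hxopt.1.trans hz.1.symm) hypos
    ht.1.le ht.2
  linarith [mul_le_mul_of_nonneg_left hKLstep hα]

theorem stmt0 {d : ℕ} (Λ : Set (Fin d → ℝ))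
    (hΛ : Λ = {x : Fin d → ℝ | (∑ i, x i) = 1 ∧ ∀ i, 0 ≤ x i})
    (f : (Fin d → ℝ) → ℝ) (hf : ConvexOn ℝ Λ f)
    (α : ℝ) (hα : 0 ≤ α)
    (KL : (Fin d → ℝ) → (Fin d → ℝ) → ℝ)
    (hKL : KL = fun p q => ∑ i, p i * Real.log (p i / q i))
    (z y xopt : Fin d → ℝ) (hz : z ∈ Λ) (hy : y ∈ Λ) (hypos : ∀ i, 0 < y i)
    (hxopt : xopt ∈ Λ)
    (hmin : ∀ x ∈ Λ, f xopt + α * KL xopt y ≤ f x + α * KL x y) :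
    f xopt + α * KL xopt y ≤ f z + α * KL z y - α * KL z xopt :=
  stmt0_general Λ hΛ f hf α hα KL hKL z y xopt hz hypos hxopt hmin
end

section
/- Let S be a finite state space, H a horizon, and for a Markov game with single-controller transition P_h(s'|s,a) (independent of b), policies μ = {μ_h}, ν = {ν_h}, ν' = {ν'_h}, and reward r_h : S × A × B → ℝ, the value difference satisfies V₁^{μ,ν}(s₁) − V₁^{μ,ν'}(s₁) = Σ_{h=1}^H Σ_{s∈S} q_h^{μ,P}(s) · μ_h(·|s)ᵀ r_h(s,·,·) (ν_h(·|s) − ν'_h(·|s)), where q_h^{μ,P}(s) = Pr(s_h = s | μ, P, s₁) is the state reaching probability under μ and P (which does not depend on ν or ν'). -/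
/-! Write `D_h = Σ_s q_h(s) (V_h(s) - V'_h(s))`. Because the transition ignores the opponent's action
and both opponent policies are distributions, subtracting the two Bellman equations at a state leaves
the reward term `μ_hᵀ r_h (ν_h - ν'_h)` plus the one-step expectation, under `μ_h` and `P_h`, of
`V_{h+1} - V'_{h+1}`. Averaging over `q_h` turns that expectation into `D_{h+1}`, since `q_{h+1}` is
the push-forward of `q_h` by `μ_h` and `P_h`. Hence the reward terms are the increments
`D_h - D_{h+1}`, and the sum telescopes from `D_1 = V_1(s₁) - V'_1(s₁)` to `D_{H+1} = 0`. -/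

open Finset

section SingleController

variable {S A B : Type*} [Fintype S] [Fintype A] [Fintype B]

lemma sum_sum_mul_add_mul_of_sum_eq_one (μ : A → ℝ) (r : A → B → ℝ) (X : A → ℝ) {ν : B → ℝ}
    (hν : ∑ b, ν b = 1) :
    ∑ a, ∑ b, μ a * (r a b + X a) * ν b = ∑ a, ∑ b, μ a * r a b * ν b + ∑ a, μ a * X a := by
  rw [← sum_add_distrib]
  refine sum_congr rfl fun a _ => ?_
  simp only [mul_add, add_mul, sum_add_distrib, ← mul_sum, hν, mul_one]

lemma bellman_sub_bellman_of_singleController (μ : A → ℝ) (r : A → B → ℝ) (P : A → S → ℝ)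
    (W W' : S → ℝ) {ν ν' : B → ℝ} (hν : ∑ b, ν b = 1) (hν' : ∑ b, ν' b = 1) :
    ∑ a, ∑ b, μ a * (r a b + ∑ s', P a s' * W s') * ν b
      - ∑ a, ∑ b, μ a * (r a b + ∑ s', P a s' * W' s') * ν' b
      = ∑ a, ∑ b, μ a * r a b * (ν b - ν' b) + ∑ a, μ a * ∑ s', P a s' * (W s' - W' s') := by
  rw [sum_sum_mul_add_mul_of_sum_eq_one _ _ _ hν, sum_sum_mul_add_mul_of_sum_eq_one _ _ _ hν']
  simp only [mul_sub, sum_sub_distrib]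
  ring

lemma sum_mul_eq_sum_mul_sum_transition (q q' : S → ℝ) (μ : S → A → ℝ) (P : S → A → S → ℝ)
    (hq' : ∀ s', q' s' = ∑ s, ∑ a, q s * μ s a * P s a s') (f : S → ℝ) :
    ∑ s', q' s' * f s' = ∑ s, q s * ∑ a, μ s a * ∑ s', P s a s' * f s' := by
  simp only [hq', sum_mul, mul_sum]
  rw [sum_comm]
  refine sum_congr rfl fun s _ => ?_
  rw [sum_comm]
  exact sum_congr rfl fun a _ => sum_congr rfl fun s' _ => by ring

end SingleController

theorem stmt12_general {S A B : Type*} [Fintype S] [Fintype A] [Fintype B]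
    (H : ℕ) (s₁ : S)
    (P : ℕ → S → A → S → ℝ) (r : ℕ → S → A → B → ℝ)
    (μ : ℕ → S → A → ℝ) (ν ν' : ℕ → S → B → ℝ)
    (hν : ∀ h s, (∀ b, 0 ≤ ν h s b) ∧ ∑ b, ν h s b = 1)
    (hν' : ∀ h s, (∀ b, 0 ≤ ν' h s b) ∧ ∑ b, ν' h s b = 1)
    (V V' : ℕ → S → ℝ) (q : ℕ → S → ℝ)
    (hV : ∀ h ∈ Finset.Icc 1 H, ∀ s, V h s =
      ∑ a, ∑ b, μ h s a * (r h s a b + ∑ s', P h s a s' * V (h+1) s') * ν h s b)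
    (hV' : ∀ h ∈ Finset.Icc 1 H, ∀ s, V' h s =
      ∑ a, ∑ b, μ h s a * (r h s a b + ∑ s', P h s a s' * V' (h+1) s') * ν' h s b)
    (hVend : ∀ s, V (H+1) s = 0) (hV'end : ∀ s, V' (H+1) s = 0)
    (hq1 : q 1 s₁ = 1) (hq1' : ∀ s, s ≠ s₁ → q 1 s = 0)
    (hqrec : ∀ h s', q (h+1) s' = ∑ s, ∑ a, q h s * μ h s a * P h s a s') :
    V 1 s₁ - V' 1 s₁ =
      ∑ h ∈ Finset.Icc 1 H, ∑ s, q h s *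
        (∑ a, ∑ b, μ h s a * r h s a b * (ν h s b - ν' h s b)) := by
  set D : ℕ → ℝ := fun h => ∑ s, q h s * (V h s - V' h s)
  have hV_sub : ∀ h ∈ Icc 1 H, ∀ s, V h s - V' h s =
      ∑ a, ∑ b, μ h s a * r h s a b * (ν h s b - ν' h s b)
        + ∑ a, μ h s a * ∑ s', P h s a s' * (V (h + 1) s' - V' (h + 1) s') := by
    intro h hh s
    rw [hV h hh, hV' h hh]
    exact bellman_sub_bellman_of_singleController _ _ _ _ _ (hν h s).2 (hν' h s).2
  have hD_step : ∀ h ∈ Icc 1 H, ∑ s, q h s *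
      (∑ a, ∑ b, μ h s a * r h s a b * (ν h s b - ν' h s b)) = -(D (h + 1) - D h) := by
    intro h hh
    simp only [D, sum_mul_eq_sum_mul_sum_transition _ _ _ _ (hqrec h), hV_sub h hh, mul_add,
      sum_add_distrib]
    ring
  have hD_one : D 1 = V 1 s₁ - V' 1 s₁ := by
    simp only [D]
    rw [sum_eq_single s₁ (fun s _ hs => by rw [hq1' s hs, zero_mul]) (by simp), hq1, one_mul]
  have hD_end : D (H + 1) = 0 := by simp [D, hVend, hV'end]
  rw [sum_congr rfl hD_step, sum_neg_distrib, ← Ico_add_one_right_eq_Icc,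
    sum_Ico_sub D (by omega), hD_end, hD_one]
  ring

theorem stmt12 {S A B : Type*} [Fintype S] [Fintype A] [Fintype B]
    (H : ℕ) (s₁ : S)
    (P : ℕ → S → A → S → ℝ) (r : ℕ → S → A → B → ℝ)
    (μ : ℕ → S → A → ℝ) (ν ν' : ℕ → S → B → ℝ)
    (hμ : ∀ h s, (∀ a, 0 ≤ μ h s a) ∧ ∑ a, μ h s a = 1)
    (hν : ∀ h s, (∀ b, 0 ≤ ν h s b) ∧ ∑ b, ν h s b = 1)
    (hν' : ∀ h s, (∀ b, 0 ≤ ν' h s b) ∧ ∑ b, ν' h s b = 1)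
    (hP : ∀ h s a, (∀ s', 0 ≤ P h s a s') ∧ ∑ s', P h s a s' = 1)
    (V V' : ℕ → S → ℝ) (q : ℕ → S → ℝ)
    (hV : ∀ h ∈ Finset.Icc 1 H, ∀ s, V h s =
      ∑ a, ∑ b, μ h s a * (r h s a b + ∑ s', P h s a s' * V (h+1) s') * ν h s b)
    (hV' : ∀ h ∈ Finset.Icc 1 H, ∀ s, V' h s =
      ∑ a, ∑ b, μ h s a * (r h s a b + ∑ s', P h s a s' * V' (h+1) s') * ν' h s b)
    (hVend : ∀ s, V (H+1) s = 0) (hV'end : ∀ s, V' (H+1) s = 0)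
    (hq1 : q 1 s₁ = 1) (hq1' : ∀ s, s ≠ s₁ → q 1 s = 0)
    (hqrec : ∀ h s', q (h+1) s' = ∑ s, ∑ a, q h s * μ h s a * P h s a s') :
    V 1 s₁ - V' 1 s₁ =
      ∑ h ∈ Finset.Icc 1 H, ∑ s, q h s *
        (∑ a, ∑ b, μ h s a * r h s a b * (ν h s b - ν' h s b)) :=
  stmt12_general H s₁ P r μ ν ν' hν hν' V V' q hV hV' hVend hV'end hq1 hq1' hqrec
end
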